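/- arXiv:1410.0339 — 3 statements merged into one kernel-verified Lean document; each statement's English description precedes it below -/
import Mathlib

section
/- Let A be an n×n complex block shift with superdiagonal blocks A_1, …, A_{k-1}, where A_j is an n_j×n_{j+1} complex matrix, and let A' be the k×k matrix with (j, j+1) entry equal to ‖A_j‖ (the operator norm of A_j) for 1 ≤ j ≤ k-1 and all other entries zero. Then w(A) ≤ w(A'). -/
/-!
Split a unit vector `x` into its blocks `x_j`. The quadratic form of the block shift is
`∑ j, ⟪x_j, A_j x_{j+1}⟫`, whose modulus is at most `∑ j, ‖A_j‖ ‖x_j‖ ‖x_{j+1}‖`. This is the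
quadratic form of the scalar shift at the vector `(‖x_0‖, …, ‖x_k‖)`, which is again a unit vector.
-/

/-- The numerical radius `w(M)` of a square complex matrix, acting on Euclidean space:
`w(M) = sup {|⟨Mx, x⟩| : ‖x‖ = 1}` (here `inner x (M x)` is Mathlib's inner product, conjugate
linear in the first variable, so it equals the paper's `⟨Mx, x⟩`). -/
noncomputable def numRadius {ι : Type*} [Fintype ι] [DecidableEq ι] (M : Matrix ι ι ℂ) : ℝ :=
  sSup {r : ℝ | ∃ x : EuclideanSpace ℂ ι, ‖x‖ = 1 ∧
    ‖(inner ℂ x (Matrix.toEuclideanLin M x) : ℂ)‖ = r}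

/-- The operator norm `‖A‖ = max {‖Ax‖ : ‖x‖ = 1}` of a rectangular complex matrix. -/
noncomputable def opNorm {m n : Type*} [Fintype m] [Fintype n] [DecidableEq n]
    (A : Matrix m n ℂ) : ℝ :=
  sSup {r : ℝ | ∃ x : EuclideanSpace ℂ n, ‖x‖ = 1 ∧ ‖Matrix.toEuclideanLin A x‖ = r}

/-- The `(k+1) × (k+1)` complex matrix with prescribed entries `c 0, …, c (k-1)` on the
superdiagonal and zeros elsewhere. -/
def superdiagMatrix {k : ℕ} (c : Fin k → ℂ) : Matrix (Fin (k + 1)) (Fin (k + 1)) ℂ :=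
  Matrix.of fun i j => if h : (i : ℕ) < k ∧ (j : ℕ) = (i : ℕ) + 1 then c ⟨i, h.1⟩ else 0

/-- The block shift with `k+1` diagonal blocks of sizes `n 0, …, n k` and the rectangular
matrices `B j` (of size `n j × n (j+1)`) in the `(j, j+1)` block positions, zeros elsewhere. -/
noncomputable def blockShiftMatrix {k : ℕ} (n : Fin (k + 1) → ℕ)
    (B : ∀ j : Fin k, Matrix (Fin (n j.castSucc)) (Fin (n j.succ)) ℂ) :
    Matrix ((j : Fin (k + 1)) × Fin (n j)) ((j : Fin (k + 1)) × Fin (n j)) ℂ :=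
  Matrix.of fun p q => ∑ j : Fin k,
    if h : p.1 = j.castSucc ∧ q.1 = j.succ
    then B j (Fin.cast (congrArg n h.1) p.2) (Fin.cast (congrArg n h.2) q.2)
    else 0

section NumericalRadius

variable {ι : Type*} [Fintype ι] [DecidableEq ι]

lemma norm_inner_le_numRadius (M : Matrix ι ι ℂ) {x : EuclideanSpace ℂ ι} (hx : ‖x‖ = 1) :
    ‖inner ℂ x (Matrix.toEuclideanLin M x)‖ ≤ numRadius M := by
  refine le_csSup ⟨‖LinearMap.toContinuousLinearMap (Matrix.toEuclideanLin M)‖, ?_⟩ ⟨x, hx, rfl⟩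
  rintro _ ⟨y, hy, rfl⟩
  calc ‖inner ℂ y (Matrix.toEuclideanLin M y)‖ ≤ ‖y‖ * ‖Matrix.toEuclideanLin M y‖ :=
        norm_inner_le_norm _ _
    _ ≤ ‖LinearMap.toContinuousLinearMap (Matrix.toEuclideanLin M)‖ := by
        simpa [hy] using (LinearMap.toContinuousLinearMap (Matrix.toEuclideanLin M)).le_opNorm y

lemma numRadius_nonneg [Nonempty ι] (M : Matrix ι ι ℂ) : 0 ≤ numRadius M := by
  obtain ⟨i⟩ := ‹Nonempty ι›
  exact (norm_nonneg _).trans (norm_inner_le_numRadius M (x := EuclideanSpace.single i 1) (by simp))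

end NumericalRadius

section OperatorNorm

variable {m n : Type*} [Fintype m] [Fintype n] [DecidableEq n]

lemma opNorm_nonneg (A : Matrix m n ℂ) : 0 ≤ opNorm A :=
  Real.sSup_nonneg (by rintro _ ⟨x, -, rfl⟩; positivity)

lemma norm_toEuclideanLin_le_opNorm_mul (A : Matrix m n ℂ) (x : EuclideanSpace ℂ n) :
    ‖Matrix.toEuclideanLin A x‖ ≤ opNorm A * ‖x‖ := by
  rcases eq_or_ne x 0 with rfl | hx
  · simp
  have hx₀ : 0 < ‖x‖ := norm_pos_iff.2 hx
  have hbdd : BddAbove {r : ℝ | ∃ x : EuclideanSpace ℂ n, ‖x‖ = 1 ∧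
      ‖Matrix.toEuclideanLin A x‖ = r} := by
    refine ⟨‖LinearMap.toContinuousLinearMap (Matrix.toEuclideanLin A)‖, ?_⟩
    rintro _ ⟨y, hy, rfl⟩
    simpa [hy] using (LinearMap.toContinuousLinearMap (Matrix.toEuclideanLin A)).le_opNorm y
  have hunit : ‖(‖x‖⁻¹ : ℂ) • x‖ = 1 := by
    rw [norm_smul]; simp [hx₀.ne']
  have := le_csSup hbdd ⟨_, hunit, rfl⟩
  rw [map_smul, norm_smul] at this
  simp only [norm_inv, Complex.norm_real, norm_norm] at this
  rwa [inv_mul_le_iff₀ hx₀, mul_comm] at this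

end OperatorNorm

open ComplexConjugate

section QuadraticForm

variable {𝕜 : Type*} [RCLike 𝕜] {m n : Type*} [Fintype m] [Fintype n] [DecidableEq n]

lemma inner_toEuclideanLin_eq_sum (M : Matrix m n 𝕜) (y : EuclideanSpace 𝕜 m)
    (x : EuclideanSpace 𝕜 n) :
    inner 𝕜 y (Matrix.toEuclideanLin M x) = ∑ a, ∑ b, conj (y a) * M a b * x b := by
  simp only [EuclideanSpace.inner_eq_star_dotProduct, Matrix.ofLp_toLpLin, Matrix.toLin'_apply,
    dotProduct, Matrix.mulVec, Finset.sum_mul, Pi.star_apply, RCLike.star_def]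
  exact Finset.sum_congr rfl fun a _ => Finset.sum_congr rfl fun b _ => by ring

lemma inner_toEuclideanLin_single [DecidableEq m] (y : EuclideanSpace 𝕜 m) (i j : m) (c : 𝕜) :
    inner 𝕜 y (Matrix.toEuclideanLin (Matrix.single i j c) y) = conj (y i) * c * y j := by
  simp [inner_toEuclideanLin_eq_sum, Matrix.single_apply, ite_and]

end QuadraticForm

section Blocks

variable {𝕜 : Type*} [RCLike 𝕜] {ι : Type*} [Fintype ι] {n : ι → ℕ}

def blockComponent (x : EuclideanSpace 𝕜 ((i : ι) × Fin (n i))) (i : ι) :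
    EuclideanSpace 𝕜 (Fin (n i)) :=
  WithLp.toLp 2 fun a => x ⟨i, a⟩

lemma sum_norm_blockComponent_sq (x : EuclideanSpace 𝕜 ((i : ι) × Fin (n i))) :
    ∑ i, ‖blockComponent x i‖ ^ 2 = ‖x‖ ^ 2 := by
  simp [EuclideanSpace.norm_sq_eq, Fintype.sum_sigma, blockComponent]

noncomputable def blockNorms (x : EuclideanSpace 𝕜 ((i : ι) × Fin (n i))) : EuclideanSpace 𝕜 ι :=
  WithLp.toLp 2 fun i => (‖blockComponent x i‖ : 𝕜)

lemma norm_blockNorms (x : EuclideanSpace 𝕜 ((i : ι) × Fin (n i))) : ‖blockNorms x‖ = ‖x‖ := by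
  rw [← sq_eq_sq₀ (norm_nonneg _) (norm_nonneg _), ← sum_norm_blockComponent_sq,
    EuclideanSpace.norm_sq_eq]
  simp [blockNorms]

variable [DecidableEq ι]

variable (n) in
def embedBlock (i j : ι) (C : Matrix (Fin (n i)) (Fin (n j)) 𝕜) :
    Matrix ((l : ι) × Fin (n l)) ((l : ι) × Fin (n l)) 𝕜 :=
  Matrix.of fun p q => if h : p.1 = i ∧ q.1 = j
    then C (Fin.cast (congrArg n h.1) p.2) (Fin.cast (congrArg n h.2) q.2) else 0

lemma inner_toEuclideanLin_embedBlock (x : EuclideanSpace 𝕜 ((i : ι) × Fin (n i))) (i j : ι)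
    (C : Matrix (Fin (n i)) (Fin (n j)) 𝕜) :
    inner 𝕜 x (Matrix.toEuclideanLin (embedBlock n i j C) x)
      = inner 𝕜 (blockComponent x i) (Matrix.toEuclideanLin C (blockComponent x j)) := by
  rw [inner_toEuclideanLin_eq_sum, inner_toEuclideanLin_eq_sum, Fintype.sum_sigma,
    Fintype.sum_eq_single i fun l hl => ?_]
  · refine Finset.sum_congr rfl fun a _ => ?_
    rw [Fintype.sum_sigma, Fintype.sum_eq_single j fun l hl => ?_]
    · simp [embedBlock, blockComponent]
    · simp [embedBlock, hl]
  · simp [embedBlock, hl]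

end Blocks

lemma blockShiftMatrix_eq_sum_embedBlock {k : ℕ} (n : Fin (k + 1) → ℕ)
    (B : ∀ j : Fin k, Matrix (Fin (n j.castSucc)) (Fin (n j.succ)) ℂ) :
    blockShiftMatrix n B = ∑ j, embedBlock n j.castSucc j.succ (B j) := by
  ext p q
  simp [Matrix.sum_apply, blockShiftMatrix, embedBlock]

lemma superdiagMatrix_eq_sum_single {k : ℕ} (c : Fin k → ℂ) :
    superdiagMatrix c = ∑ j, Matrix.single j.castSucc j.succ (c j) := by
  ext i i'
  rw [Matrix.sum_apply]
  simp only [superdiagMatrix, Matrix.of_apply, Matrix.single_apply, Fin.ext_iff, Fin.val_castSucc,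
    Fin.val_succ]
  split_ifs with h
  · rw [Finset.sum_eq_single ⟨i, h.1⟩ (fun j _ hj => if_neg fun h' => hj (Fin.ext h'.1)) (by simp)]
    simp [h.2]
  · refine (Finset.sum_eq_zero fun j _ => if_neg ?_).symm
    rintro ⟨h1, h2⟩
    exact h ⟨h1 ▸ j.isLt, by omega⟩

lemma norm_inner_blockShiftMatrix_le {k : ℕ} (n : Fin (k + 1) → ℕ)
    (B : ∀ j : Fin k, Matrix (Fin (n j.castSucc)) (Fin (n j.succ)) ℂ)
    (x : EuclideanSpace ℂ ((i : Fin (k + 1)) × Fin (n i))) :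
    ‖inner ℂ x (Matrix.toEuclideanLin (blockShiftMatrix n B) x)‖
      ≤ ∑ j, opNorm (B j) * (‖blockComponent x j.castSucc‖ * ‖blockComponent x j.succ‖) := by
  rw [blockShiftMatrix_eq_sum_embedBlock, map_sum, LinearMap.sum_apply, inner_sum]
  refine (norm_sum_le _ _).trans (Finset.sum_le_sum fun j _ => ?_)
  rw [inner_toEuclideanLin_embedBlock]
  calc _ ≤ ‖blockComponent x j.castSucc‖
          * ‖Matrix.toEuclideanLin (B j) (blockComponent x j.succ)‖ :=
        norm_inner_le_norm _ _
    _ ≤ ‖blockComponent x j.castSucc‖ * (opNorm (B j) * ‖blockComponent x j.succ‖) :=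
        mul_le_mul_of_nonneg_left (norm_toEuclideanLin_le_opNorm_mul _ _) (norm_nonneg _)
    _ = _ := by ring

lemma inner_toEuclideanLin_superdiagMatrix {k : ℕ} (c : Fin k → ℂ)
    (y : EuclideanSpace ℂ (Fin (k + 1))) :
    inner ℂ y (Matrix.toEuclideanLin (superdiagMatrix c) y)
      = ∑ j, conj (y j.castSucc) * c j * y j.succ := by
  simp only [superdiagMatrix_eq_sum_single, map_sum, LinearMap.sum_apply, inner_sum,
    inner_toEuclideanLin_single]

lemma inner_toEuclideanLin_superdiagMatrix_blockNorms {k : ℕ} (c : Fin k → ℝ)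
    {n : Fin (k + 1) → ℕ} (x : EuclideanSpace ℂ ((i : Fin (k + 1)) × Fin (n i))) :
    inner ℂ (blockNorms x)
        (Matrix.toEuclideanLin (superdiagMatrix fun j => (c j : ℂ)) (blockNorms x))
      = ((∑ j, c j * (‖blockComponent x j.castSucc‖ * ‖blockComponent x j.succ‖) : ℝ) : ℂ) := by
  rw [inner_toEuclideanLin_superdiagMatrix]
  push_cast
  refine Finset.sum_congr rfl fun j _ => ?_
  simp only [blockNorms, RCLike.ofReal_eq_complex_ofReal, Complex.conj_ofReal]
  ring

/-- For a block shift `A` with superdiagonal blocks `A_j`, the numerical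
radius of `A` is at most that of the scalar shift with superdiagonal entries `‖A_j‖`. -/
theorem numRadius_blockShift_le_numRadius_superdiag_opNorm {k : ℕ} (n : Fin (k + 1) → ℕ)
    (B : ∀ j : Fin k, Matrix (Fin (n j.castSucc)) (Fin (n j.succ)) ℂ) :
    numRadius (blockShiftMatrix n B)
      ≤ numRadius (superdiagMatrix fun j => (opNorm (B j) : ℂ)) := by
  refine Real.sSup_le ?_ (numRadius_nonneg _)
  rintro _ ⟨x, hx, rfl⟩
  calc _ ≤ ∑ j, opNorm (B j) * (‖blockComponent x j.castSucc‖ * ‖blockComponent x j.succ‖) :=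
        norm_inner_blockShiftMatrix_le n B x
    _ = ‖inner ℂ (blockNorms x) (Matrix.toEuclideanLin
          (superdiagMatrix fun j => (opNorm (B j) : ℂ)) (blockNorms x))‖ := by
        rw [inner_toEuclideanLin_superdiagMatrix_blockNorms, Complex.norm_real,
          Real.norm_of_nonneg]
        exact Finset.sum_nonneg fun j _ => mul_nonneg (opNorm_nonneg _) (by positivity)
    _ ≤ _ := norm_inner_le_numRadius _ ((norm_blockNorms x).trans hx)
end

section
/- Let A be the 6×6 complex matrix with nonzero entries only A(1,2) = √2, A(3,4) = 1, A(5,6) = 1 (all other entries zero), and let A' be the 5×5 matrix with superdiagonal entries √2, 0, 1, 1 (in that order) and all other entries zero. Then w(A) = w(A') = √2/2, but A is not unitarily similar to A' ⊕ [0] (the direct sum of A' with the 1×1 zero matrix). -/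
/-- Two square complex matrices (possibly indexed by different finite types) are unitarily
similar if a unitary operator, i.e. a linear isometric equivalence of the underlying Euclidean
spaces, intertwines the induced operators. -/
def UnitarilySimilar {ι κ : Type*} [Fintype ι] [Fintype κ] [DecidableEq ι] [DecidableEq κ]
    (A : Matrix ι ι ℂ) (B : Matrix κ κ ℂ) : Prop :=
  ∃ U : EuclideanSpace ℂ ι ≃ₗᵢ[ℂ] EuclideanSpace ℂ κ,
    ∀ x, U (Matrix.toEuclideanLin A x) = Matrix.toEuclideanLin B (U x)

/-!
Both numerical radii are bounded by the triangle inequality `|⟨Mx, x⟩| ≤ ∑ |M i j| |x i| |x j|`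
followed by AM-GM, and the bound `√2/2` is attained at `(e₁ + e₂)/√2`. Unitary similarity
preserves whether a matrix squares to zero; `A² = 0`, whereas `A' ⊕ [0]` has the nonzero
entry `(A'²)₃₅ = 1`.
-/

open Matrix ComplexConjugate

section

variable {ι κ : Type*} [Fintype ι] [DecidableEq ι] [Fintype κ] [DecidableEq κ]

theorem numRadius_eq_of_forall_le_of_eq {M : Matrix ι ι ℂ} {c : ℝ}
    (hle : ∀ x : EuclideanSpace ℂ ι, ‖x‖ = 1 → ‖inner ℂ x (toEuclideanLin M x)‖ ≤ c)
    (x₀ : EuclideanSpace ℂ ι) (hx₀ : ‖x₀‖ = 1) (hc : ‖inner ℂ x₀ (toEuclideanLin M x₀)‖ = c) :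
    numRadius M = c :=
  IsGreatest.csSup_eq ⟨⟨x₀, hx₀, hc⟩, by rintro r ⟨x, hx, rfl⟩; exact hle x hx⟩

theorem inner_toEuclideanLin_self (M : Matrix ι ι ℂ) (x : EuclideanSpace ℂ ι) :
    inner ℂ x (toEuclideanLin M x) = ∑ i, ∑ j, conj (x i) * M i j * x j := by
  simp only [PiLp.inner_apply, toLpLin_apply, RCLike.inner_apply, mulVec, dotProduct,
    Finset.sum_mul]
  exact Finset.sum_congr rfl fun i _ => Finset.sum_congr rfl fun j _ => by ring

theorem norm_inner_toEuclideanLin_self_le (M : Matrix ι ι ℂ) (x : EuclideanSpace ℂ ι) :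
    ‖inner ℂ x (toEuclideanLin M x)‖ ≤ ∑ i, ∑ j, ‖M i j‖ * (‖x i‖ * ‖x j‖) := by
  rw [inner_toEuclideanLin_self]
  refine (norm_sum_le _ _).trans (Finset.sum_le_sum fun i _ => (norm_sum_le _ _).trans ?_)
  refine (Finset.sum_le_sum fun j _ => le_of_eq ?_)
  simp only [norm_mul, Complex.norm_conj]
  ring

theorem UnitarilySimilar.pow {A : Matrix ι ι ℂ} {B : Matrix κ κ ℂ} (h : UnitarilySimilar A B)
    (k : ℕ) : UnitarilySimilar (A ^ k) (B ^ k) := by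
  obtain ⟨U, hU⟩ := h
  refine ⟨U, fun x => ?_⟩
  simp only [toLpLin_pow, Module.End.pow_apply]
  exact Function.Semiconj.iterate_right hU k x

theorem UnitarilySimilar.eq_zero {A : Matrix ι ι ℂ} {B : Matrix κ κ ℂ} (h : UnitarilySimilar A B)
    (hA : A = 0) : B = 0 := by
  obtain ⟨U, hU⟩ := h
  refine toEuclideanLin.injective (LinearMap.ext fun y => ?_)
  rw [← U.apply_symm_apply y, ← hU, hA]
  simp

end

noncomputable def matA : Matrix (Fin 6) (Fin 6) ℂ :=
  !![0, (Real.sqrt 2 : ℂ), 0, 0, 0, 0;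
     0, 0, 0, 0, 0, 0;
     0, 0, 0, 1, 0, 0;
     0, 0, 0, 0, 0, 0;
     0, 0, 0, 0, 0, 1;
     0, 0, 0, 0, 0, 0]

noncomputable def matA' : Matrix (Fin 5) (Fin 5) ℂ :=
  !![0, (Real.sqrt 2 : ℂ), 0, 0, 0;
     0, 0, 0, 0, 0;
     0, 0, 0, 1, 0;
     0, 0, 0, 0, 1;
     0, 0, 0, 0, 0]

theorem sqrt_two_mul_add_mul_add_mul_le (a b c d e f : ℝ) :
    √2 * (a * b) + c * d + e * f ≤ √2 / 2 * (a ^ 2 + b ^ 2 + c ^ 2 + d ^ 2 + e ^ 2 + f ^ 2) := by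
  have h2 : √2 ^ 2 = 2 := Real.sq_sqrt (by norm_num)
  have h1 : 1 ≤ √2 := Real.one_le_sqrt.mpr (by norm_num)
  nlinarith [sq_nonneg (a - b), sq_nonneg (c - d), sq_nonneg (e - f)]

/- `d (c + e) ≤ √2/2 (d² + (c + e)²/2)` by AM-GM, and `(c + e)² ≤ 2 (c² + e²)`. -/
theorem sqrt_two_mul_add_mul_add_mul_le' (a b c d e : ℝ) :
    √2 * (a * b) + c * d + d * e ≤ √2 / 2 * (a ^ 2 + b ^ 2 + c ^ 2 + d ^ 2 + e ^ 2) := by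
  have h0 := Real.sqrt_nonneg 2
  have h2 : √2 ^ 2 = 2 := Real.sq_sqrt (by norm_num)
  have h3 : √2 ^ 3 = 2 * √2 := by rw [pow_succ, h2]
  nlinarith [mul_nonneg h0 (sq_nonneg (a - b)), mul_nonneg h0 (sq_nonneg (c + e - √2 * d)),
    mul_nonneg h0 (sq_nonneg (c - e))]

theorem numRadius_matA : numRadius matA = √2 / 2 := by
  refine numRadius_eq_of_forall_le_of_eq (fun x hx => ?_) !₂[√2 / 2, √2 / 2, 0, 0, 0, 0] ?_ ?_
  · calc ‖inner ℂ x (toEuclideanLin matA x)‖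
        ≤ √2 * (‖x 0‖ * ‖x 1‖) + ‖x 2‖ * ‖x 3‖ + ‖x 4‖ * ‖x 5‖ := by
          refine (norm_inner_toEuclideanLin_self_le matA x).trans_eq ?_
          simp [matA, Fin.sum_univ_succ, add_assoc]
      _ ≤ √2 / 2 * ‖x‖ ^ 2 := by
          rw [EuclideanSpace.norm_sq_eq, Fin.sum_univ_six]
          exact sqrt_two_mul_add_mul_add_mul_le ..
      _ = √2 / 2 := by rw [hx, one_pow, mul_one]
  · rw [EuclideanSpace.norm_eq]
    norm_num [Fin.sum_univ_succ, div_pow]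
  · rw [inner_toEuclideanLin_self]
    simp [matA, Fin.sum_univ_succ, abs_of_nonneg, div_mul_eq_mul_div]

theorem numRadius_matA' : numRadius matA' = √2 / 2 := by
  refine numRadius_eq_of_forall_le_of_eq (fun x hx => ?_) !₂[√2 / 2, √2 / 2, 0, 0, 0] ?_ ?_
  · calc ‖inner ℂ x (toEuclideanLin matA' x)‖
        ≤ √2 * (‖x 0‖ * ‖x 1‖) + ‖x 2‖ * ‖x 3‖ + ‖x 3‖ * ‖x 4‖ := by
          refine (norm_inner_toEuclideanLin_self_le matA' x).trans_eq ?_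
          simp [matA', Fin.sum_univ_succ, add_assoc]
      _ ≤ √2 / 2 * ‖x‖ ^ 2 := by
          rw [EuclideanSpace.norm_sq_eq, Fin.sum_univ_five]
          exact sqrt_two_mul_add_mul_add_mul_le' ..
      _ = √2 / 2 := by rw [hx, one_pow, mul_one]
  · rw [EuclideanSpace.norm_eq]
    norm_num [Fin.sum_univ_succ, div_pow]
  · rw [inner_toEuclideanLin_self]
    simp [matA', Fin.sum_univ_succ, abs_of_nonneg, div_mul_eq_mul_div]

theorem matA_sq : matA ^ 2 = 0 := by
  ext i j
  fin_cases i <;> fin_cases j <;> simp [sq, matA, mul_apply, Fin.sum_univ_succ]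

theorem fromBlocks_matA'_sq_ne_zero :
    fromBlocks matA' 0 0 (0 : Matrix (Fin 1) (Fin 1) ℂ) ^ 2 ≠ 0 := by
  intro h
  have h24 := congrFun (congrFun h (Sum.inl 2)) (Sum.inl 4)
  simp [sq, matA', mul_apply, Fin.sum_univ_succ] at h24

/-- The 6×6 matrix with entries `√2, 1, 1` at positions `(1,2), (3,4), (5,6)`
and the 5×5 matrix with superdiagonal `√2, 0, 1, 1` both have numerical radius `√2/2`, yet the
6×6 matrix is not unitarily similar to the direct sum of the 5×5 one and a 1×1 zero. -/
theorem example_upper_bound_equality_without_direct_summand :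
    numRadius (!![0, (Real.sqrt 2 : ℂ), 0, 0, 0, 0;
                  0, 0, 0, 0, 0, 0;
                  0, 0, 0, 1, 0, 0;
                  0, 0, 0, 0, 0, 0;
                  0, 0, 0, 0, 0, 1;
                  0, 0, 0, 0, 0, 0]) = Real.sqrt 2 / 2 ∧
    numRadius (!![0, (Real.sqrt 2 : ℂ), 0, 0, 0;
                  0, 0, 0, 0, 0;
                  0, 0, 0, 1, 0;
                  0, 0, 0, 0, 1;
                  0, 0, 0, 0, 0]) = Real.sqrt 2 / 2 ∧
    ¬ UnitarilySimilar
        (!![0, (Real.sqrt 2 : ℂ), 0, 0, 0, 0;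
            0, 0, 0, 0, 0, 0;
            0, 0, 0, 1, 0, 0;
            0, 0, 0, 0, 0, 0;
            0, 0, 0, 0, 0, 1;
            0, 0, 0, 0, 0, 0])
        (Matrix.fromBlocks
          (!![0, (Real.sqrt 2 : ℂ), 0, 0, 0;
              0, 0, 0, 0, 0;
              0, 0, 0, 1, 0;
              0, 0, 0, 0, 1;
              0, 0, 0, 0, 0]) 0 0 (0 : Matrix (Fin 1) (Fin 1) ℂ)) := by
  refine ⟨numRadius_matA, numRadius_matA', fun h => ?_⟩
  exact fromBlocks_matA'_sq_ne_zero ((h.pow 2).eq_zero matA_sq)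
end

section
/- Let A be an n×n complex block shift. Then the numerical range W(A) of A is the closed disc in ℂ centered at the origin with radius w(A); that is, W(A) = {z ∈ ℂ : |z| ≤ w(A)}. -/
/-- The numerical range `W(M) = {⟨Mx, x⟩ : ‖x‖ = 1}` of a square complex matrix. -/
def numRange {ι : Type*} [Fintype ι] [DecidableEq ι] (M : Matrix ι ι ℂ) : Set ℂ :=
  {z : ℂ | ∃ x : EuclideanSpace ℂ ι, ‖x‖ = 1 ∧ (inner ℂ x (Matrix.toEuclideanLin M x) : ℂ) = z}

/-- A square matrix is a block shift if the coordinates can be graded by a monotone function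
into consecutive blocks so that all nonzero entries lie in the superdiagonal blocks. -/
def IsBlockShift {m : ℕ} (M : Matrix (Fin m) (Fin m) ℂ) : Prop :=
  ∃ f : Fin m → ℕ, Monotone f ∧ ∀ i j, M i j ≠ 0 → f j = f i + 1

/-!
Grade the coordinates by `f` so that `A` only maps grade `k + 1` to grade `k`. For `‖u‖ = 1` the
diagonal unitary `D = diag (u ^ f i)` satisfies `D⋆ A D = u • A`, so the numerical range is
invariant under rotations about the origin. It contains `0`, a diagonal entry of `A`, and it is
the continuous image of the unit sphere, hence compact and connected. So the moduli of its points
fill the whole interval `[0, w(A)]`, and rotation invariance turns this into the disc.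
-/

open Matrix Metric Set
open scoped Pointwise

section NumericalRange

variable {ι : Type*} [Fintype ι] [DecidableEq ι]

lemma numRange_eq_image_sphere (M : Matrix ι ι ℂ) :
    numRange M =
      (fun x => inner ℂ x (toEuclideanLin M x)) '' sphere (0 : EuclideanSpace ℂ ι) 1 := by
  ext z; simp [numRange]

lemma numRadius_eq_sSup_norm_image (M : Matrix ι ι ℂ) :
    numRadius M = sSup (norm '' numRange M) := by
  rw [numRadius, numRange]
  congr 1
  ext r
  simp

lemma isCompact_numRange (M : Matrix ι ι ℂ) : IsCompact (numRange M) := by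
  rw [numRange_eq_image_sphere]
  exact (isCompact_sphere 0 1).image
    (continuous_id.inner (toEuclideanLin M).continuous_of_finiteDimensional)

lemma isConnected_numRange [Nonempty ι] (M : Matrix ι ι ℂ) : IsConnected (numRange M) := by
  have hrank : Module.finrank ℝ (EuclideanSpace ℂ ι) = 2 * Fintype.card ι := by
    rw [← Module.finrank_mul_finrank ℝ ℂ, Complex.finrank_real_complex,
      finrank_euclideanSpace]
  rw [numRange_eq_image_sphere]
  refine (isConnected_sphere ?_ 0 zero_le_one).image _
    (continuous_id.inner (toEuclideanLin M).continuous_of_finiteDimensional).continuousOn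
  rw [← Module.finrank_eq_rank, hrank]
  exact_mod_cast (by linarith [Fintype.card_pos (α := ι)] : 1 < 2 * Fintype.card ι)

lemma norm_le_numRadius {M : Matrix ι ι ℂ} {z : ℂ} (hz : z ∈ numRange M) :
    ‖z‖ ≤ numRadius M := by
  rw [numRadius_eq_sSup_norm_image]
  exact le_csSup ((isCompact_numRange M).image continuous_norm).bddAbove
    (mem_image_of_mem _ hz)

lemma numRadius_mem_norm_image [Nonempty ι] (M : Matrix ι ι ℂ) :
    numRadius M ∈ norm '' numRange M := by
  rw [numRadius_eq_sSup_norm_image]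
  exact ((isCompact_numRange M).image continuous_norm).sSup_mem
    ((isConnected_numRange M).nonempty.image _)

lemma Icc_zero_numRadius_subset_norm_image [Nonempty ι] {M : Matrix ι ι ℂ}
    (h0 : 0 ∈ numRange M) : Icc 0 (numRadius M) ⊆ norm '' numRange M :=
  ((isConnected_numRange M).image _ continuous_norm.continuousOn).isPreconnected.Icc_subset
    (by simpa using mem_image_of_mem norm h0) (numRadius_mem_norm_image M)

lemma diag_mem_numRange (M : Matrix ι ι ℂ) (i : ι) : M i i ∈ numRange M :=
  ⟨EuclideanSpace.single i 1, by simp,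
    by simp [EuclideanSpace.inner_single_left, toLpLin_apply]⟩

lemma numRange_smul (c : ℂ) (M : Matrix ι ι ℂ) : numRange (c • M) = c • numRange M := by
  ext z
  simp [numRange, mem_smul_set, eq_comm]

lemma inner_toEuclideanLin_star_mul_mul (U M : Matrix ι ι ℂ) (x : EuclideanSpace ℂ ι) :
    inner ℂ x (toEuclideanLin (star U * M * U) x)
      = inner ℂ (toEuclideanLin U x) (toEuclideanLin M (toEuclideanLin U x)) := by
  rw [star_eq_conjTranspose, toLpLin_mul_same, toLpLin_mul_same, LinearMap.comp_apply,
    LinearMap.comp_apply, toEuclideanLin_conjTranspose_eq_adjoint, LinearMap.adjoint_inner_right]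

lemma numRange_star_mul_mul_subset {U : Matrix ι ι ℂ} (hU : U ∈ unitaryGroup ι ℂ)
    (M : Matrix ι ι ℂ) : numRange (star U * M * U) ⊆ numRange M := by
  rintro _ ⟨x, hx, rfl⟩
  refine ⟨toEuclideanLin U x, ?_, (inner_toEuclideanLin_star_mul_mul U M x).symm⟩
  have hinner := inner_toEuclideanLin_star_mul_mul U 1 x
  simp only [mul_one, (mem_unitaryGroup_iff').1 hU, toLpLin_one, LinearMap.id_apply] at hinner
  rw [← hx, norm_eq_sqrt_re_inner (𝕜 := ℂ), norm_eq_sqrt_re_inner (𝕜 := ℂ), hinner]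

end NumericalRange

lemma diagonal_pow_mem_unitaryGroup {ι : Type*} [Fintype ι] [DecidableEq ι] {u : ℂ}
    (hu : ‖u‖ = 1) (f : ι → ℕ) : diagonal (fun i => u ^ f i) ∈ unitaryGroup ι ℂ := by
  rw [mem_unitaryGroup_iff', star_eq_conjTranspose, diagonal_conjTranspose, diagonal_mul_diagonal]
  simp [← mul_pow, Complex.conj_mul', hu]

lemma diag_eq_zero_of_grading {ι : Type*} {A : Matrix ι ι ℂ} {f : ι → ℕ}
    (hf : ∀ i j, A i j ≠ 0 → f j = f i + 1) (i : ι) : A i i = 0 :=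
  not_not.1 fun h => by simpa using hf i i h

section Grading

variable {ι : Type*} [Fintype ι] [DecidableEq ι] {A : Matrix ι ι ℂ} {f : ι → ℕ}

lemma star_diagonal_pow_mul_mul_diagonal_pow (hf : ∀ i j, A i j ≠ 0 → f j = f i + 1) {u : ℂ}
    (hu : ‖u‖ = 1) :
    star (diagonal fun i => u ^ f i) * A * diagonal (fun i => u ^ f i) = u • A := by
  ext i j
  simp only [star_eq_conjTranspose, diagonal_conjTranspose, diagonal_mul, mul_diagonal,
    Pi.star_apply, star_pow, Matrix.smul_apply, smul_eq_mul]
  by_cases hij : A i j = 0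
  · simp [hij]
  · calc star u ^ f i * A i j * u ^ f j = (star u * u) ^ f i * (u * A i j) := by
          rw [hf i j hij]; ring
      _ = u * A i j := by simp [Complex.conj_mul', hu]

lemma smul_numRange_subset_of_grading (hf : ∀ i j, A i j ≠ 0 → f j = f i + 1) {u : ℂ}
    (hu : ‖u‖ = 1) : u • numRange A ⊆ numRange A := by
  rw [← numRange_smul, ← star_diagonal_pow_mul_mul_diagonal_pow hf hu]
  exact numRange_star_mul_mul_subset (diagonal_pow_mem_unitaryGroup hu f) A

end Grading

lemma eq_setOf_norm_le_of_smul_subset {S : Set ℂ} {r : ℝ}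
    (hrot : ∀ u : ℂ, ‖u‖ = 1 → u • S ⊆ S) (hle : ∀ z ∈ S, ‖z‖ ≤ r)
    (hnorm : Icc 0 r ⊆ norm '' S) : S = {z : ℂ | ‖z‖ ≤ r} := by
  refine Subset.antisymm hle fun z hz => ?_
  obtain ⟨y, hyS, hyz⟩ := hnorm ⟨norm_nonneg z, hz⟩
  rcases eq_or_ne y 0 with rfl | hy
  · obtain rfl : z = 0 := norm_eq_zero.1 (hyz.symm.trans norm_zero)
    exact hyS
  · have hu : ‖z / y‖ = 1 := by rw [norm_div, hyz, div_self (hyz ▸ norm_ne_zero_iff.2 hy)]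
    simpa [div_mul_cancel₀ z hy] using hrot _ hu (smul_mem_smul_set hyS)

/-- The numerical range of a block shift is the closed disc centered at the
origin with radius equal to its numerical radius. -/
theorem numRange_blockShift_eq_closedDisc {n : ℕ} (hn : 0 < n)
    (A : Matrix (Fin n) (Fin n) ℂ) (hA : IsBlockShift A) :
    numRange A = {z : ℂ | ‖z‖ ≤ numRadius A} := by
  obtain ⟨f, -, hf⟩ := hA
  have : Nonempty (Fin n) := ⟨⟨0, hn⟩⟩
  have h0 : (0 : ℂ) ∈ numRange A := by
    simpa [diag_eq_zero_of_grading hf] using diag_mem_numRange A ⟨0, hn⟩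
  exact eq_setOf_norm_le_of_smul_subset (fun u hu => smul_numRange_subset_of_grading hf hu)
    (fun z => norm_le_numRadius) (Icc_zero_numRadius_subset_norm_image h0)
end
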